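/- arXiv:math/0602194 — 7 statements merged into one kernel-verified Lean document; each statement's English description precedes it below -/
import Mathlib

section
/- Let A be a unital C*-algebra and a, b, c, d ∈ A. The matrix [[a, b], [c, d]] is a positive element of Mat₂(A) if and only if a ≥ 0, d ≥ 0, c = b*, and for every real ε > 0 one has a ≥ b (d + ε·1)⁻¹ b* (here d + ε·1 is invertible since d ≥ 0 and ε > 0). -/
/-!
For `ε > 0` the element `x = d + ε` is strictly positive, and the Schur factorization
`[[a, b], [b*, x]] = L · diag(a - b x⁻¹ b*, x) · L*` with the invertible
`L = [[1, b x⁻¹], [0, 1]]` shows that `[[a, b], [b*, x]] ≥ 0` exactly when `b x⁻¹ b* ≤ a`.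
This matrix is `M + ε · E₂₂`, where `M = [[a, b], [b*, d]]`: it is positive whenever `M` is,
and since the positive cone of `Mat₂(A)` is closed, `M ≥ 0` follows by letting `ε → 0`.
-/

open Matrix

/-- An element of `Mat₂(A)` is positive (as an element of the C*-algebra `Mat₂(A)`)
iff it is of the form `Nᴴ * N`. -/
def Mat2IsPositive {A : Type*} [Ring A] [StarRing A]
    (M : Matrix (Fin 2) (Fin 2) A) : Prop :=
  ∃ N : Matrix (Fin 2) (Fin 2) A, M = Nᴴ * N

open Filter Topology

theorem nonneg_of_forall_nonneg_add_smul {E : Type*} [TopologicalSpace E] [AddCommGroup E]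
    [Module ℝ E] [ContinuousAdd E] [ContinuousSMul ℝ E] [PartialOrder E] [OrderClosedTopology E]
    {x : E} (y : E) (h : ∀ ε : ℝ, 0 < ε → 0 ≤ x + ε • y) : 0 ≤ x := by
  have hlim : Tendsto (fun ε : ℝ => x + ε • y) (𝓝[>] 0) (𝓝 x) := by
    simpa using (((tendsto_id (x := 𝓝 (0 : ℝ))).smul_const y).const_add x).mono_left
      nhdsWithin_le_nhds
  exact ge_of_tendsto hlim (eventually_nhdsWithin_of_forall h)

theorem Matrix.fin_two_eq_unitriangular_mul_diagonal_mul {A : Type*} [Ring A] [StarRing A]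
    {a b x e : A} (hex : e * x = 1) (hxe : x * e = 1) (he : star e = e) :
    !![a, b; star b, x] =
      !![1, b * e; 0, 1] * !![a - b * e * star b, 0; 0, x] * !![1, b * e; 0, 1]ᴴ := by
  have hxe' (y : A) : x * (e * y) = y := by rw [← mul_assoc, hxe, one_mul]
  ext i j
  fin_cases i <;> fin_cases j <;> simp [mul_apply, he, mul_assoc, hex, hxe']

/-- Only the C⋆-algebra structure of `CStarMatrix` is transferred: on `CStarMatrix` itself,
instance search finds the entrywise `Algebra ℝ` structure, which is not reducibly the one that
the continuous functional calculus is built on. -/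
def CStarMat (n A : Type*) : Type _ := CStarMatrix n n A

namespace CStarMat

variable {A : Type*} [CStarAlgebra A] [PartialOrder A] [StarOrderedRing A]
variable {n : Type*} [Fintype n] [DecidableEq n]

noncomputable instance : CStarAlgebra (CStarMat n A) :=
  inferInstanceAs (CStarAlgebra (CStarMatrix n n A))

noncomputable instance : PartialOrder (CStarMat n A) := CStarAlgebra.spectralOrder _

instance : StarOrderedRing (CStarMat n A) := CStarAlgebra.spectralOrderedRing _

def ofMatrix : Matrix n n A ≃ CStarMat n A := Equiv.refl _

lemma ofMatrix_mul (M N : Matrix n n A) : ofMatrix (M * N) = ofMatrix M * ofMatrix N := rfl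

lemma ofMatrix_conjTranspose (M : Matrix n n A) : ofMatrix Mᴴ = star (ofMatrix M) := rfl

lemma ofMatrix_add (M N : Matrix n n A) : ofMatrix (M + N) = ofMatrix M + ofMatrix N := rfl

lemma ofMatrix_smul (r : ℝ) (M : Matrix n n A) : ofMatrix (r • M) = r • ofMatrix M := rfl

lemma exists_eq_conjTranspose_mul_self_iff {M : Matrix n n A} :
    (∃ N : Matrix n n A, M = Nᴴ * N) ↔ 0 ≤ ofMatrix M := by
  rw [CStarAlgebra.nonneg_iff_eq_star_mul_self, ofMatrix.surjective.exists]
  rfl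

lemma isHermitian_of_ofMatrix_nonneg {M : Matrix n n A} (hM : 0 ≤ ofMatrix M) : M.IsHermitian :=
  ofMatrix.injective (IsSelfAdjoint.of_nonneg hM).star_eq

lemma apply_self_nonneg {M : Matrix n n A} (hM : 0 ≤ ofMatrix M) (i : n) : 0 ≤ M i i := by
  obtain ⟨N, rfl⟩ := exists_eq_conjTranspose_mul_self_iff.mpr hM
  rw [mul_apply]
  exact Finset.sum_nonneg fun k _ => star_mul_self_nonneg (N k i)

lemma ofMatrix_diagonal_nonneg_iff {v : n → A} :
    0 ≤ ofMatrix (diagonal v) ↔ ∀ i, 0 ≤ v i := by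
  refine ⟨fun h i => by simpa using apply_self_nonneg h i, fun h => ?_⟩
  choose w hw using fun i => CStarAlgebra.nonneg_iff_eq_star_mul_self.mp (h i)
  rw [← exists_eq_conjTranspose_mul_self_iff]
  refine ⟨diagonal w, ?_⟩
  rw [diagonal_conjTranspose, diagonal_mul_diagonal]
  exact congrArg diagonal (funext hw)

lemma isUnit_ofMatrix_unitriangular (y : A) : IsUnit (ofMatrix !![1, y; 0, 1]) := by
  have hr : !![1, y; 0, 1] * !![1, -y; 0, 1] = 1 := by simp [one_fin_two]
  have hl : !![1, -y; 0, 1] * !![1, y; 0, 1] = 1 := by simp [one_fin_two]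
  exact ⟨⟨ofMatrix !![1, y; 0, 1], ofMatrix !![1, -y; 0, 1], congrArg ofMatrix hr,
    congrArg ofMatrix hl⟩, rfl⟩

lemma ofMatrix_fin_two_nonneg_iff {a b x : A} (hx : IsStrictlyPositive x) :
    0 ≤ ofMatrix !![a, b; star b, x] ↔ b * Ring.inverse x * star b ≤ a := by
  rw [fin_two_eq_unitriangular_mul_diagonal_mul (Ring.inverse_mul_cancel x hx.isUnit)
      (Ring.mul_inverse_cancel x hx.isUnit) hx.isSelfAdjoint.ringInverse.star_eq,
    ofMatrix_mul, ofMatrix_mul, ofMatrix_conjTranspose,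
    (isUnit_ofMatrix_unitriangular _).star_right_conjugate_nonneg_iff,
    ← diagonal_vec2, ofMatrix_diagonal_nonneg_iff, Fin.forall_fin_two]
  simp [hx.nonneg, sub_nonneg]

end CStarMat

open CStarMat

theorem stmt_2 {A : Type*} [CStarAlgebra A] [PartialOrder A] [StarOrderedRing A]
    (a b c d : A) :
    Mat2IsPositive !![a, b; c, d] ↔
      0 ≤ a ∧ 0 ≤ d ∧ c = star b ∧
        ∀ ε : ℝ, 0 < ε → b * Ring.inverse (d + (ε : ℂ) • 1) * star b ≤ a := by
  simp only [Complex.coe_smul]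
  rw [Mat2IsPositive, exists_eq_conjTranspose_mul_self_iff]
  have hshift (ε : ℝ) :
      ofMatrix !![a, b; c, d + ε • 1] =
        ofMatrix !![a, b; c, d] + ε • ofMatrix !![0, 0; 0, 1] := by
    rw [← ofMatrix_smul, ← ofMatrix_add]
    congr 1
    ext i j
    fin_cases i <;> fin_cases j <;> simp
  have hE : 0 ≤ ofMatrix !![(0 : A), 0; 0, 1] := by
    rw [← diagonal_vec2, ofMatrix_diagonal_nonneg_iff, Fin.forall_fin_two]
    simp
  constructor
  · intro hM
    obtain rfl : c = star b := ((isHermitian_of_ofMatrix_nonneg hM).apply 1 0).symm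
    have hd : 0 ≤ d := apply_self_nonneg hM 1
    refine ⟨apply_self_nonneg hM 0, hd, rfl, fun ε hε => ?_⟩
    rw [← ofMatrix_fin_two_nonneg_iff ((isStrictlyPositive_one.smul hε).nonneg_add hd), hshift]
    exact add_nonneg hM (smul_nonneg hε.le hE)
  · rintro ⟨-, hd, rfl, hle⟩
    refine nonneg_of_forall_nonneg_add_smul (ofMatrix !![0, 0; 0, 1]) fun ε hε => ?_
    rw [← hshift, ofMatrix_fin_two_nonneg_iff ((isStrictlyPositive_one.smul hε).nonneg_add hd)]
    exact hle ε hε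
end

section
/- Let A be a unital C*-algebra and a, b, d ∈ A. Assume that a commutes with b and that b is normal (b*b = bb*). If the matrix [[a, b], [b*, d]] is a positive element of Mat₂(A), then the matrix [[a, b*], [b, d]] is also a positive element of Mat₂(A). -/
/-!
If `a` is invertible, put `c = a⁻¹ (b⋆ - b)`. As `a` is self-adjoint and commutes with `b` and
`b⋆`, and `b` is normal, `c` is skew-adjoint and commutes with `b`, and the congruence by the
unipotent matrix `[[1, c], [0, 1]]` turns `[[a, b], [b⋆, d]]` into `[[a, b⋆], [b, d]]`; congruence
preserves positivity. In general `a ≥ 0`, being a corner of `N⋆N`, so this applies to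
`[[a + ε, b], [b⋆, d + ε]]` for every `ε > 0`, and the positive cone of `Mat₂(A)` is closed.
-/

open Matrix

open CStarMatrix

theorem Matrix.swap_offDiag_eq_conjTranspose_mul_mul {R : Type*} [Ring R] [StarRing R]
    {a b c d : R} (hac : a * c = star b - b) (ha : IsSelfAdjoint a) (hc : star c = -c)
    (hbc : Commute b c) :
    !![a, star b; b, d] = !![1, c; 0, 1]ᴴ * !![a, b; star b, d] * !![1, c; 0, 1] := by
  have hca : star c * a = b - star b := by
    simpa [ha.star_eq] using congrArg star hac
  ext i j
  fin_cases i <;> fin_cases j <;> simp [Matrix.mul_apply, Fin.sum_univ_two, hac, hca]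
  rw [hc, neg_mul, hbc.eq, add_neg_cancel_left]

theorem Matrix.conjTranspose_mul_self_apply_self_nonneg {R n : Type*} [NonUnitalSemiring R]
    [PartialOrder R] [StarRing R] [StarOrderedRing R] [Fintype n] (N : Matrix n n R) (i : n) :
    0 ≤ (Nᴴ * N) i i :=
  Finset.sum_nonneg fun k _ => star_mul_self_nonneg (N k i)

theorem CStarMatrix.ofMatrix_add_algebraMap {R B : Type*} [CommSemiring R] [Semiring B]
    [Algebra R B] (a b c d : B) (r : R) :
    ofMatrix !![a, b; c, d] + algebraMap R (CStarMatrix (Fin 2) (Fin 2) B) r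
      = ofMatrix !![a + algebraMap R B r, b; c, d + algebraMap R B r] := by
  ext i j
  fin_cases i <;> fin_cases j <;> simp [Algebra.algebraMap_eq_smul_one]

theorem CStarAlgebra.nonneg_of_forall_nonneg_add_algebraMap {B : Type*} [CStarAlgebra B]
    [PartialOrder B] [StarOrderedRing B] {x : B}
    (h : ∀ ε : ℝ, 0 < ε → 0 ≤ x + algebraMap ℝ B ε) : 0 ≤ x := by
  have hlim : Filter.Tendsto (fun ε : ℝ => x + algebraMap ℝ B ε)
      (nhdsWithin 0 (Set.Ioi 0)) (nhds x) := by
    simpa using (((continuous_algebraMap ℝ B).const_add x).tendsto 0).mono_left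
      nhdsWithin_le_nhds
  exact CStarAlgebra.isClosed_nonneg.mem_of_tendsto hlim (eventually_nhdsWithin_of_forall h)

section CStarAlgebra

variable {A : Type*} [CStarAlgebra A] [PartialOrder A] [StarOrderedRing A]

theorem mat2IsPositive_iff_nonneg (M : Matrix (Fin 2) (Fin 2) A) :
    Mat2IsPositive M ↔ 0 ≤ ofMatrix M := by
  -- Instance search does not find these two for `CStarMatrix`.
  have : NonUnitalContinuousFunctionalCalculus ℝ (CStarMatrix (Fin 2) (Fin 2) A) IsSelfAdjoint :=
    IsSelfAdjoint.instNonUnitalContinuousFunctionalCalculus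
  have : NonnegSpectrumClass ℝ (CStarMatrix (Fin 2) (Fin 2) A) :=
    CStarAlgebra.instNonnegSpectrumClass
  rw [CStarAlgebra.nonneg_iff_eq_star_mul_self]
  exact ⟨fun ⟨N, hN⟩ => ⟨ofMatrix N, hN⟩, fun ⟨N, hN⟩ => ⟨ofMatrix.symm N, hN⟩⟩

theorem CStarMatrix.ofMatrix_swap_nonneg_of_isUnit {a b d : A} (ha : IsUnit a)
    (hsa : IsSelfAdjoint a) (hab : Commute a b) (hb : IsStarNormal b)
    (h : 0 ≤ ofMatrix !![a, b; star b, d]) :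
    0 ≤ ofMatrix !![a, star b; b, d] := by
  obtain ⟨u, rfl⟩ := ha
  have hr : star (↑u⁻¹ : A) = ↑u⁻¹ := by
    rw [← Units.coe_star_inv, (Units.ext hsa.star_eq : star u = u)]
  have hrb : Commute (↑u⁻¹ : A) b := hab.units_inv_left
  have hrb' : Commute (↑u⁻¹ : A) (star b) := (hsa.star_eq ▸ hab.star_star).units_inv_left
  set c : A := ↑u⁻¹ * (star b - b)
  have hac : ↑u * c = star b - b := u.mul_inv_cancel_left _
  have hc : star c = -c := by
    rw [star_mul, hr, star_sub, star_star, ← neg_sub, neg_mul, ← (hrb'.sub_right hrb).eq]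
  have hbc : Commute b c :=
    hrb.symm.mul_right (hb.star_comm_self.symm.sub_right (Commute.refl b))
  rw [Matrix.swap_offDiag_eq_conjTranspose_mul_mul hac hsa hc hbc]
  exact star_left_conjugate_nonneg h (ofMatrix !![1, c; 0, 1])

end CStarAlgebra

theorem stmt_6 {A : Type*} [CStarAlgebra A] (a b d : A)
    (hab : a * b = b * a) (hb : star b * b = b * star b)
    (h : Mat2IsPositive !![a, b; star b, d]) :
    Mat2IsPositive !![a, star b; b, d] := by
  let : PartialOrder A := CStarAlgebra.spectralOrder A
  let : StarOrderedRing A := CStarAlgebra.spectralOrderedRing A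
  have ha : 0 ≤ a := by
    obtain ⟨N, hN⟩ := h
    simpa [← hN] using N.conjTranspose_mul_self_apply_self_nonneg 0
  rw [mat2IsPositive_iff_nonneg] at h ⊢
  refine CStarAlgebra.nonneg_of_forall_nonneg_add_algebraMap fun ε hε => ?_
  have haε := IsStrictlyPositive.nonneg_add ha (isStrictlyPositive_algebraMap (A := A) hε)
  -- `rw` does not match the instances of the generic C⋆-algebra statements on `CStarMatrix`.
  have hperturbed : 0 ≤ ofMatrix !![a + algebraMap ℝ A ε, b; star b, d + algebraMap ℝ A ε] :=
    ofMatrix_add_algebraMap a b (star b) d ε ▸ add_nonneg h (algebraMap_nonneg _ hε.le)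
  exact (ofMatrix_swap_nonneg_of_isUnit haε.isUnit haε.nonneg.isSelfAdjoint
    (.add_left hab (Algebra.commutes ε b)) ⟨hb⟩ hperturbed).trans_eq
    (ofMatrix_add_algebraMap a (star b) b d ε).symm
end

section
/- Let A be a nontrivial unital C*-algebra, x ∈ A with x*x + xx* = 1, and suppose x² (x²)* = θ·1 for some real θ ≥ 0. Then the element z := x*x satisfies z² − z + θ·1 = 0, and consequently θ ≤ 1/4. -/
open Polynomial
theorem stmt_10 {A : Type*} [CStarAlgebra A] [Nontrivial A] (x : A) (θ : ℝ)
    (hθ0 : 0 ≤ θ)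
    (hx : star x * x + x * star x = 1)
    (hθ : x ^ 2 * star (x ^ 2) = (θ : ℂ) • 1) :
    (star x * x) * (star x * x) - star x * x + (θ : ℂ) • 1 = 0 ∧ θ ≤ 1 / 4 := by
  have h1 : x * star x = 1 - star x * x := eq_sub_of_add_eq' hx
  have key : x ^ 2 * star (x ^ 2) = star x * x - (star x * x) * (star x * x) := by
    calc x ^ 2 * star (x ^ 2) = x * (x * star x) * star x := by
          simp only [pow_two, star_mul]; noncomm_ring
      _ = x * (1 - star x * x) * star x := by rw [h1]
      _ = x * star x - (x * star x) * (x * star x) := by noncomm_ring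
      _ = (1 - star x * x) - (1 - star x * x) * (1 - star x * x) := by rw [h1]
      _ = star x * x - (star x * x) * (star x * x) := by noncomm_ring
  have hu : star x * x - (star x * x) * (star x * x) = (θ : ℂ) • 1 := key ▸ hθ
  have part1 : (star x * x) * (star x * x) - star x * x + (θ : ℂ) • 1 = 0 := by
    rw [← hu]; abel
  refine ⟨part1, ?_⟩
  have hsa : IsSelfAdjoint (star x * x) := IsSelfAdjoint.star_mul_self x
  obtain ⟨lam, hlam⟩ := spectrum.nonempty (star x * x)
  have hre := hsa.mem_spectrum_eq_re hlam
  -- polynomial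
  have haev : (aeval (star x * x) (X ^ 2 - X + C (θ : ℂ))) = 0 := by
    simp only [map_add, map_sub, map_pow, aeval_X, aeval_C, Algebra.algebraMap_eq_smul_one]
    rw [pow_two]; exact part1
  have hmem := spectrum.subset_polynomial_aeval (star x * x) (X ^ 2 - X + C (θ : ℂ))
    ⟨lam, hlam, rfl⟩
  rw [haev, spectrum.zero_eq] at hmem
  have heq : eval lam (X ^ 2 - X + C (θ : ℂ)) = 0 := hmem
  simp only [eval_add, eval_sub, eval_pow, eval_X, eval_C] at heq
  rw [hre] at heq
  have : (lam.re : ℂ) ^ 2 - (lam.re : ℂ) + (θ : ℂ) = 0 := heq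
  have hr : lam.re ^ 2 - lam.re + θ = 0 := by exact_mod_cast this
  nlinarith [sq_nonneg (lam.re - 1/2)]
end

section
/- Let A be a unital C*-algebra and x ∈ A with x*x + xx* = 1 and x² (x²)* = (1/4)·1. Then x*x = (1/2)·1 and xx* = (1/2)·1; in particular, √2·x is a unitary element of A. -/
theorem stmt_11 {A : Type*} [CStarAlgebra A] (x : A)
    (hx : star x * x + x * star x = 1)
    (hθ : x ^ 2 * star (x ^ 2) = ((1 / 4 : ℝ) : ℂ) • 1) :
    star x * x = ((1 / 2 : ℝ) : ℂ) • 1 ∧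
    x * star x = ((1 / 2 : ℝ) : ℂ) • 1 ∧
    (Real.sqrt 2 : ℂ) • x ∈ unitary A := by
  set q : A := x * star x with hq
  have hx' : x * star x = 1 - star x * x := by rw [← hx]; abel
  have key : q - q * q = ((1 / 4 : ℝ) : ℂ) • 1 := by
    have h1 : x ^ 2 * star (x ^ 2) = x * (x * star x) * star x := by
      rw [pow_two, star_mul]; noncomm_ring
    have h2 : x * (1 - star x * x) * star x = q - q * q := by
      rw [hq]; noncomm_ring
    rw [← h2, ← hx', ← h1, hθ]
  set a : A := q - ((1 / 2 : ℝ) : ℂ) • 1 with ha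
  have hsa : star a = a := by
    rw [ha, star_sub, star_smul, star_one, hq, star_mul, star_star,
      Complex.star_def, Complex.conj_ofReal]
  have haa : a * a = 0 := by
    have expand : a * a = q * q - ((1 / 2 : ℝ) : ℂ) • q - ((1 / 2 : ℝ) : ℂ) • q
        + (((1 / 2 : ℝ) : ℂ) * ((1 / 2 : ℝ) : ℂ)) • (1 : A) := by
      rw [ha]
      simp only [sub_mul, mul_sub, smul_mul_assoc, mul_smul_comm, smul_smul,
        mul_one, one_mul]
      module
    have hqq : q * q = q - ((1 / 4 : ℝ) : ℂ) • 1 := by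
      rw [← key]; abel
    rw [expand, hqq]
    have : (((1 / 2 : ℝ) : ℂ) * ((1 / 2 : ℝ) : ℂ)) = ((1 / 4 : ℝ) : ℂ) := by
      push_cast; norm_num
    rw [this]
    module
  have ha0 : a = 0 := by
    have hn : ‖a‖ * ‖a‖ = 0 := by
      rw [← CStarRing.norm_star_mul_self, hsa, haa, norm_zero]
    have : ‖a‖ = 0 := by nlinarith [norm_nonneg a]
    exact norm_eq_zero.mp this
  have hq2 : q = ((1 / 2 : ℝ) : ℂ) • 1 := by
    have := ha0
    rw [ha, sub_eq_zero] at this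
    exact this
  have hp2 : star x * x = ((1 / 2 : ℝ) : ℂ) • 1 := by
    have : star x * x = 1 - q := by rw [← hx]; abel
    rw [this, hq2]
    module
  refine ⟨hp2, hq2, ?_⟩
  have hs2 : ((Real.sqrt 2 : ℝ) : ℂ) * ((Real.sqrt 2 : ℝ) : ℂ) = 2 := by
    push_cast
    rw [← Complex.ofReal_mul, Real.mul_self_sqrt (by norm_num)]
    norm_num
  rw [Unitary.mem_iff]
  constructor
  · rw [star_smul, Complex.star_def, Complex.conj_ofReal, smul_mul_smul_comm,
      hp2, hs2, smul_smul]
    norm_num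
  · rw [star_smul, Complex.star_def, Complex.conj_ofReal, smul_mul_smul_comm,
      ← hq, hq2, hs2, smul_smul]
    norm_num
end

section
/- Let A be a nontrivial unital C*-algebra and x ∈ A a nonzero element such that x*x + xx* = 1 and x² (x²)* = θ·1 for some real θ ≥ 0. Then exactly one of the following holds: (i) θ = 0, x² = 0, and x is a partial isometry with x*x = e and xx* = 1 − e for some projection e with e ≠ 0 and e ≠ 1; (ii) 0 < θ < 1/4 and x = α₁ v₁ + α₂ v₂, where α₁ = ((1 − √(1 − 4θ))/2)^{1/2}, α₂ = ((1 + √(1 − 4θ))/2)^{1/2}, and v₁, v₂ are partial isometries with v₁*v₁ = e, v₁v₁* = 1 − e, v₂*v₂ = 1 − e, v₂v₂* = e for some projection e with e ≠ 0 and e ≠ 1; (iii) θ = 1/4 and √2·x is unitary. -/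
set_option maxHeartbeats 1000000

lemma aux_sa_sq_zero {A : Type*} [CStarAlgebra A] {c : A} (h : star c = c)
    (h2 : c * c = 0) : c = 0 :=
  (CStarRing.star_mul_self_eq_zero_iff c).mp (by rw [h, h2])

/-- If `q` is self-adjoint and satisfies `q*q = q - θ•1`, then some real `t`
satisfies the quadratic `t² - t + θ = 0`. -/
lemma aux_spec_quad {A : Type*} [CStarAlgebra A] [Nontrivial A] {q : A} {θ : ℝ}
    (hsa : IsSelfAdjoint q) (h : q * q = q - (θ : ℂ) • 1) :
    ∃ t : ℝ, t * t - t + θ = 0 := by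
  obtain ⟨z, hz⟩ := spectrum.nonempty q
  have hre : z = z.re := hsa.mem_spectrum_eq_re hz
  have key : z * z - z + (θ : ℂ) = 0 := by
    by_contra hne
    apply spectrum.notMem_iff.mpr ?_ hz
    set w : ℂ := z * z - z + (θ : ℂ) with hw
    refine ⟨⟨algebraMap ℂ A z - q, w⁻¹ • ((z - 1) • 1 + q), ?_, ?_⟩, rfl⟩
    · have hkey : (algebraMap ℂ A z - q) * ((z - 1) • 1 + q) = w • 1 := by
        simp only [Algebra.algebraMap_eq_smul_one, sub_mul, mul_add, add_mul, mul_sub,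
          smul_mul_assoc, mul_smul_comm, one_mul, mul_one, h, smul_sub, smul_smul, hw]
        module
      rw [mul_smul_comm, hkey, smul_smul, inv_mul_cancel₀ hne, one_smul]
    · have hkey : ((z - 1) • 1 + q) * (algebraMap ℂ A z - q) = w • 1 := by
        simp only [Algebra.algebraMap_eq_smul_one, sub_mul, mul_add, add_mul, mul_sub,
          smul_mul_assoc, mul_smul_comm, one_mul, mul_one, h, smul_sub, smul_smul, hw]
        module
      rw [smul_mul_assoc, hkey, smul_smul, inv_mul_cancel₀ hne, one_smul]
  refine ⟨z.re, ?_⟩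
  have h2 : ((z.re : ℂ)) * z.re - z.re + (θ : ℂ) = 0 := by rw [← hre]; exact key
  exact_mod_cast h2

theorem stmt_13 {A : Type*} [CStarAlgebra A] [Nontrivial A] (x : A) (θ : ℝ)
    (hx0 : x ≠ 0) (hθ0 : 0 ≤ θ)
    (hx : star x * x + x * star x = 1)
    (hθ : x ^ 2 * star (x ^ 2) = (θ : ℂ) • 1) :
    (θ = 0 ∧ x ^ 2 = 0 ∧
      ∃ e : A, star e = e ∧ e * e = e ∧ e ≠ 0 ∧ e ≠ 1 ∧
        star x * x = e ∧ x * star x = 1 - e) ∨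
    (0 < θ ∧ θ < 1 / 4 ∧
      ∃ e v₁ v₂ : A,
        star e = e ∧ e * e = e ∧ e ≠ 0 ∧ e ≠ 1 ∧
        star v₁ * v₁ = e ∧ v₁ * star v₁ = 1 - e ∧
        star v₂ * v₂ = 1 - e ∧ v₂ * star v₂ = e ∧
        x = (Real.sqrt ((1 - Real.sqrt (1 - 4 * θ)) / 2) : ℂ) • v₁ +
            (Real.sqrt ((1 + Real.sqrt (1 - 4 * θ)) / 2) : ℂ) • v₂) ∨
    (θ = 1 / 4 ∧ (Real.sqrt 2 : ℂ) • x ∈ unitary A) := by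
  set q : A := x * star x with hqdef
  have hp : star x * x = 1 - q := eq_sub_of_add_eq hx
  have hqsa : IsSelfAdjoint q := by
    simp [IsSelfAdjoint, hqdef, star_mul]
  have h1 : x * q * star x = (θ : ℂ) • 1 := by
    rw [← hθ, hqdef]
    simp only [pow_two, star_mul]
    noncomm_ring
  have hq2 : q * q = q - (θ : ℂ) • 1 := by
    calc q * q = x * (star x * x) * star x := by rw [hqdef]; noncomm_ring
    _ = x * star x - x * q * star x := by rw [hp]; noncomm_ring
    _ = q - (θ : ℂ) • 1 := by rw [h1, hqdef]
  clear_value q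
  have hθ4 : θ ≤ 1 / 4 := by
    obtain ⟨t, ht⟩ := aux_spec_quad hqsa hq2
    nlinarith [sq_nonneg (t - 1/2)]
  rcases eq_or_lt_of_le hθ0 with h0 | h0
  · -- θ = 0
    left
    have hθz : θ = 0 := h0.symm
    subst hθz
    simp only [Complex.ofReal_zero, zero_smul, sub_zero] at hq2 hθ
    have hx2 : x ^ 2 = 0 := by
      have hn := CStarRing.norm_self_mul_star (x := x ^ 2)
      rw [hθ, norm_zero] at hn
      have hn2 : ‖x ^ 2‖ = 0 := by nlinarith [norm_nonneg (x ^ 2)]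
      exact norm_eq_zero.mp hn2
    refine ⟨rfl, hx2, 1 - q, ?_, ?_, ?_, ?_, hp, by rw [sub_sub_cancel]⟩
    · simp [hqsa.star_eq]
    · noncomm_ring [hq2]
    · intro h
      apply hx0
      have hz : star x * x = 0 := by rw [hp, h]
      exact (CStarRing.star_mul_self_eq_zero_iff x).mp hz
    · intro h
      apply hx0
      have hq0 : q = 0 := sub_eq_self.mp h
      rw [hqdef] at hq0
      exact (CStarRing.mul_star_self_eq_zero_iff x).mp hq0
  rcases lt_or_eq_of_le hθ4 with h4 | h4
  · -- 0 < θ < 1/4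
    right; left
    refine ⟨h0, h4, ?_⟩
    set s : ℝ := Real.sqrt (1 - 4 * θ) with hsdef
    have h4θ : (0:ℝ) < 1 - 4 * θ := by linarith
    have hss : s * s = 1 - 4 * θ := Real.mul_self_sqrt (by linarith)
    have hs0 : 0 < s := Real.sqrt_pos.mpr h4θ
    have hs1 : s < 1 := by nlinarith
    have hσ : (s : ℂ) ≠ 0 := by exact_mod_cast hs0.ne'
    have hσ1 : (s : ℂ) ≠ 1 := by
      intro hc
      exact hs1.ne (by exact_mod_cast hc)
    have hσ1' : (s : ℂ) ≠ -1 := by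
      intro hc
      have : s = (-1 : ℝ) := by exact_mod_cast hc
      linarith [hs0, this]
    clear_value s
    have hθc : (θ : ℂ) = (1 - (s:ℂ) * (s:ℂ)) / 4 := by
      have hr : θ = (1 - s * s) / 4 := by rw [hss]; ring
      rw [hr]; push_cast; ring
    set f : A := (s : ℂ)⁻¹ • (q - ((1 - (s:ℂ)) / 2) • 1) with hfdef
    have hqf : q = ((1 - (s:ℂ)) / 2) • 1 + (s : ℂ) • f := by
      rw [hfdef, smul_smul, mul_inv_cancel₀ hσ, one_smul]; abel
    have hfsa : star f = f := by
      rw [hfdef]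
      simp [star_smul, star_sub, hqsa.star_eq, Complex.conj_ofReal, star_div₀]
    clear_value f
    have hff : f * f = f := by
      rw [hfdef]
      simp only [smul_mul_assoc, mul_smul_comm, sub_mul, mul_sub, one_mul, mul_one,
        hq2, smul_smul, smul_sub]
      rw [hθc]
      match_scalars <;> (field_simp; try ring; try (rw [inv_pow]; exact mul_inv_cancel₀ (pow_ne_zero _ hσ)); try (exact Or.inl trivial))
    have hqmf : q * f = ((1 + (s:ℂ)) / 2) • f := by
      rw [hfdef]
      simp only [mul_smul_comm, smul_mul_assoc, mul_sub, sub_mul, mul_one, one_mul,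
        hq2, smul_smul, smul_sub]
      rw [hθc]
      match_scalars <;> (field_simp; try ring; try (rw [inv_pow]; exact mul_inv_cancel₀ (pow_ne_zero _ hσ)); try (exact Or.inl trivial))
    have hfmq : f * q = ((1 + (s:ℂ)) / 2) • f := by
      rw [hfdef]
      simp only [mul_smul_comm, smul_mul_assoc, mul_sub, sub_mul, mul_one, one_mul,
        hq2, smul_smul, smul_sub]
      rw [hθc]
      match_scalars <;> (field_simp; try ring; try (rw [inv_pow]; exact mul_inv_cancel₀ (pow_ne_zero _ hσ)); try (exact Or.inl trivial))
    have hpf : (star x * x) * f = ((1 - (s:ℂ)) / 2) • f := by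
      rw [hp, sub_mul, one_mul, hqmf]
      match_scalars <;> (field_simp; try ring; try (rw [inv_pow]; exact mul_inv_cancel₀ (pow_ne_zero _ hσ)); try (exact Or.inl trivial))
    have hfp : f * (star x * x) = ((1 - (s:ℂ)) / 2) • f := by
      rw [hp, mul_sub, mul_one, hfmq]
      match_scalars <;> (field_simp; try ring; try (rw [inv_pow]; exact mul_inv_cancel₀ (pow_ne_zero _ hσ)); try (exact Or.inl trivial))
    have hp1f : (star x * x) * (1 - f) = ((1 + (s:ℂ)) / 2) • (1 - f) := by
      rw [mul_sub, mul_one, hpf, hp, hqf]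
      match_scalars <;> (field_simp; try ring; try (rw [inv_pow]; exact mul_inv_cancel₀ (pow_ne_zero _ hσ)); try (exact Or.inl trivial))
    have hxfx : x * f * star x = ((1 - (s:ℂ)) / 2) • (1 - f) := by
      rw [hfdef, mul_smul_comm, smul_mul_assoc]
      simp only [mul_sub, sub_mul, mul_smul_comm, smul_mul_assoc, mul_one, smul_sub]
      rw [h1, ← hqdef, hqf, hθc]
      match_scalars <;> (field_simp; try ring; try (rw [inv_pow]; exact mul_inv_cancel₀ (pow_ne_zero _ hσ)); try (exact Or.inl trivial))
    have hx1fx : x * (1 - f) * star x = ((1 + (s:ℂ)) / 2) • f := by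
      have hexp : x * (1 - f) * star x = x * star x - x * f * star x := by noncomm_ring
      rw [hexp, hxfx, ← hqdef, hqf]
      match_scalars <;> (field_simp; try ring; try (rw [inv_pow]; exact mul_inv_cancel₀ (pow_ne_zero _ hσ)); try (exact Or.inl trivial))
    -- the square roots
    set α₁ : ℝ := Real.sqrt ((1 - s) / 2) with ha1def
    set α₂ : ℝ := Real.sqrt ((1 + s) / 2) with ha2def
    have hb1 : (0:ℝ) < (1 - s) / 2 := by linarith
    have hb2 : (0:ℝ) < (1 + s) / 2 := by linarith
    have hα₁ : (α₁ : ℂ) * (α₁ : ℂ) = (1 - (s:ℂ)) / 2 := by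
      rw [ha1def, ← Complex.ofReal_mul, Real.mul_self_sqrt hb1.le]
      push_cast; ring
    have hα₂ : (α₂ : ℂ) * (α₂ : ℂ) = (1 + (s:ℂ)) / 2 := by
      rw [ha2def, ← Complex.ofReal_mul, Real.mul_self_sqrt hb2.le]
      push_cast; ring
    clear_value α₁ α₂
    have hα₁0 : (α₁ : ℂ) ≠ 0 :=
      Complex.ofReal_ne_zero.mpr (by rw [ha1def]; exact (Real.sqrt_pos.mpr hb1).ne')
    have hα₂0 : (α₂ : ℂ) ≠ 0 :=
      Complex.ofReal_ne_zero.mpr (by rw [ha2def]; exact (Real.sqrt_pos.mpr hb2).ne')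
    set v₁ : A := (α₁ : ℂ)⁻¹ • (x * f) with hv1def
    set v₂ : A := (α₂ : ℂ)⁻¹ • (x * (1 - f)) with hv2def
    clear_value v₁ v₂
    have hstarinv : ∀ r : ℝ, star (((r:ℂ))⁻¹) = ((r:ℂ))⁻¹ := fun r => by
      rw [star_inv₀, Complex.star_def, Complex.conj_ofReal]
    have hsv1 : star v₁ = (α₁ : ℂ)⁻¹ • (f * star x) := by
      rw [hv1def, star_smul, star_mul, hfsa, hstarinv]
    have hsv2 : star v₂ = (α₂ : ℂ)⁻¹ • ((1 - f) * star x) := by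
      rw [hv2def, star_smul, star_mul, star_sub, star_one, hfsa, hstarinv]
    have hv1v1 : star v₁ * v₁ = f := by
      rw [hsv1, hv1def, smul_mul_smul_comm]
      have hmid : f * star x * (x * f) = ((1 - (s:ℂ)) / 2) • f := by
        rw [← mul_assoc, mul_assoc f (star x) x, hfp, smul_mul_assoc, hff]
      rw [hmid, smul_smul, ← hα₁]
      rw [show ((α₁:ℂ))⁻¹ * (α₁:ℂ)⁻¹ * ((α₁:ℂ) * (α₁:ℂ)) = 1 by field_simp, one_smul]
    have hv1v1' : v₁ * star v₁ = 1 - f := by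
      rw [hsv1, hv1def, smul_mul_smul_comm]
      have hmid : x * f * (f * star x) = ((1 - (s:ℂ)) / 2) • (1 - f) := by
        rw [← mul_assoc, mul_assoc x f f, hff, hxfx]
      rw [hmid, smul_smul, ← hα₁]
      rw [show ((α₁:ℂ))⁻¹ * (α₁:ℂ)⁻¹ * ((α₁:ℂ) * (α₁:ℂ)) = 1 by field_simp, one_smul]
    have h1ff : (1 - f : A) * (1 - f) = 1 - f := by noncomm_ring [hff]
    have hv2v2 : star v₂ * v₂ = 1 - f := by
      rw [hsv2, hv2def, smul_mul_smul_comm]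
      have hmid : (1 - f) * star x * (x * (1 - f)) = ((1 + (s:ℂ)) / 2) • (1 - f) := by
        rw [← mul_assoc, mul_assoc (1-f) (star x) x, mul_assoc (1-f) (star x * x) (1-f),
          hp1f, mul_smul_comm, h1ff]
      rw [hmid, smul_smul, ← hα₂]
      rw [show ((α₂:ℂ))⁻¹ * (α₂:ℂ)⁻¹ * ((α₂:ℂ) * (α₂:ℂ)) = 1 by field_simp, one_smul]
    have hv2v2' : v₂ * star v₂ = f := by
      rw [hsv2, hv2def, smul_mul_smul_comm]
      have hmid : x * (1 - f) * ((1 - f) * star x) = ((1 + (s:ℂ)) / 2) • f := by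
        rw [← mul_assoc, mul_assoc x (1-f) (1-f), h1ff, hx1fx]
      rw [hmid, smul_smul, ← hα₂]
      rw [show ((α₂:ℂ))⁻¹ * (α₂:ℂ)⁻¹ * ((α₂:ℂ) * (α₂:ℂ)) = 1 by field_simp, one_smul]
    have hfne0 : f ≠ 0 := by
      intro h
      rw [h, mul_zero, zero_mul, sub_zero] at hxfx
      rcases smul_eq_zero.mp hxfx.symm with hc | hc
      · rw [div_eq_zero_iff, sub_eq_zero] at hc
        rcases hc with hc | hc
        · exact hσ1 hc.symm
        · norm_num at hc
      · exact one_ne_zero hc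
    have hfne1 : f ≠ 1 := by
      intro h
      rw [h, sub_self, mul_zero, zero_mul] at hx1fx
      rcases smul_eq_zero.mp hx1fx.symm with hc | hc
      · rw [div_eq_zero_iff] at hc
        rcases hc with hc | hc
        · exact hσ1' (by linear_combination hc)
        · norm_num at hc
      · exact one_ne_zero hc
    refine ⟨f, v₁, v₂, hfsa, hff, hfne0, hfne1, hv1v1, hv1v1', hv2v2, hv2v2', ?_⟩
    rw [hv1def, hv2def, smul_smul, smul_smul,
      mul_inv_cancel₀ hα₁0, mul_inv_cancel₀ hα₂0, one_smul, one_smul]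
    noncomm_ring
  · -- θ = 1/4
    right; right
    refine ⟨h4, ?_⟩
    have hc : q - ((1:ℂ)/2) • 1 = 0 := by
      apply aux_sa_sq_zero
      · simp [star_sub, hqsa.star_eq, star_smul]
      · have hexp : (q - ((1:ℂ)/2) • 1) * (q - ((1:ℂ)/2) • 1)
            = q * q - q + ((1:ℂ)/4) • 1 := by
          simp only [sub_mul, mul_sub, smul_mul_assoc, mul_smul_comm, one_mul, mul_one,
            smul_smul]
          module
        rw [hexp, hq2]
        have ht : ((θ : ℂ)) = (1:ℂ)/4 := by rw [h4]; norm_num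
        rw [ht]
        module
    have hqhalf : q = ((1:ℂ)/2) • 1 := by rwa [sub_eq_zero] at hc
    have hs2 : (Real.sqrt 2 : ℂ) * (Real.sqrt 2 : ℂ) = 2 := by
      rw [← Complex.ofReal_mul, Real.mul_self_sqrt (by norm_num)]
      norm_num
    constructor
    · rw [star_smul, Complex.star_def, Complex.conj_ofReal, smul_mul_smul_comm, hs2, hp,
        hqhalf]
      match_scalars
      norm_num
    · rw [star_smul, Complex.star_def, Complex.conj_ofReal, smul_mul_smul_comm, hs2,
        ← hqdef, hqhalf]
      match_scalars
      norm_num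
end

section
/- Let λ₀ ∈ ℂ with |λ₀| = 1, and define Φ on the 2×2 complex matrices by Φ([[a, b], [c, d]]) = [[(a+d)/2, λ₀ b], [conj(λ₀) c, (a+d)/2]]. Then Φ is a linear map satisfying Φ(I) = I and tr(Φ(X)) = tr(X) for all X, and Φ is positive: whenever X is a positive semidefinite 2×2 complex matrix, Φ(X) is positive semidefinite. -/
open Matrix
open scoped ComplexOrder

/-!
The matrix `X'` obtained from `X` by swapping its diagonal entries is `K Xᵀ K` for the flip
`K`, hence positive semidefinite along with `X`. Since `|λ₀| = 1`, `Φ(X) = ½ D (X + X') Dᴴ` with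
`D = diag(1, conj λ₀)`, a congruence of a positive semidefinite matrix.
-/

theorem Matrix.PosSemidef.swap_diag {R : Type*} [CommRing R] [PartialOrder R] [StarRing R]
    [StarOrderedRing R] {X : Matrix (Fin 2) (Fin 2) R} (hX : X.PosSemidef) :
    (!![X 1 1, X 0 1; X 1 0, X 0 0]).PosSemidef := by
  have hflip : !![X 1 1, X 0 1; X 1 0, X 0 0] =
      (!![0, 1; 1, 0] : Matrix (Fin 2) (Fin 2) R)ᴴ * Xᵀ * !![0, 1; 1, 0] := by
    ext i j; fin_cases i <;> fin_cases j <;> simp [mul_apply, Fin.sum_univ_two]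
  rw [hflip]
  exact hX.transpose.conjTranspose_mul_mul_same _

theorem stmt_14 (l₀ : ℂ) (hl₀ : ‖l₀‖ = 1)
    (Φ : Matrix (Fin 2) (Fin 2) ℂ → Matrix (Fin 2) (Fin 2) ℂ)
    (hΦ : ∀ X, Φ X = !![(X 0 0 + X 1 1) / 2, l₀ * X 0 1;
                        (starRingEnd ℂ) l₀ * X 1 0, (X 0 0 + X 1 1) / 2]) :
    (∀ X Y, Φ (X + Y) = Φ X + Φ Y) ∧
    (∀ (c : ℂ) X, Φ (c • X) = c • Φ X) ∧
    Φ 1 = 1 ∧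
    (∀ X, (Φ X).trace = X.trace) ∧
    (∀ X, X.PosSemidef → (Φ X).PosSemidef) := by
  have hunit : starRingEnd ℂ l₀ * l₀ = 1 := by
    rw [mul_comm, Complex.mul_conj, Complex.normSq_eq_norm_sq, hl₀]; norm_num
  refine ⟨fun X Y => ?_, fun c X => ?_, ?_, fun X => ?_, fun X hX => ?_⟩
  · ext i j; fin_cases i <;> fin_cases j <;> simp [hΦ] <;> ring
  · ext i j; fin_cases i <;> fin_cases j <;> simp [hΦ] <;> ring
  · ext i j; fin_cases i <;> fin_cases j <;> simp [hΦ]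
  · simp [hΦ, trace_fin_two]
  · set D : Matrix (Fin 2) (Fin 2) ℂ := diagonal ![1, starRingEnd ℂ l₀]
    have hΦX : Φ X = (2⁻¹ : ℂ) • (D * (X + !![X 1 1, X 0 1; X 1 0, X 0 0]) * Dᴴ) := by
      ext i j; fin_cases i <;> fin_cases j <;> simp [hΦ, D]
      · ring
      · ring
      · ring
      · linear_combination -(X 0 0 + X 1 1) / 2 * hunit
    rw [hΦX]
    exact ((hX.add hX.swap_diag).mul_mul_conjTranspose_same D).smul
      (by norm_num [Complex.nonneg_iff])
end

section
/- Let λ₀ ∈ ℂ with |λ₀| = 1, λ₀ ≠ −1, and λ₀³ ≠ 1, and define Φ on the 2×2 complex matrices by Φ([[a, b], [c, d]]) = [[(a+d)/2, λ₀ b], [conj(λ₀) c, (a+d)/2]]. Then λ₀ is an eigenvalue of Φ (i.e., Φ(X) = λ₀ X for some nonzero X), but λ₀² is not an eigenvalue of Φ; in particular, the set of unimodular eigenvalues of Φ, which equals {1, λ₀, conj(λ₀)}, is not closed under multiplication and hence is not a group. -/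
/-!
Φ fixes the off-diagonal entries up to the phases λ₀ and conj λ₀ and averages the diagonal, so its
eigenvalues are 0, 1, λ₀ and conj λ₀, with eigenvectors I, E₁₂ and E₂₁ for the nonzero ones.
For |λ₀| = 1, λ₀² would have to coincide with one of these: λ₀² = 1 forces λ₀ = ±1, λ₀² = λ₀
forces λ₀ = 1, and λ₀² = conj λ₀ = λ₀⁻¹ forces λ₀³ = 1.
-/

open Matrix ComplexConjugate

def HasEigenvector {M : Type*} [Zero M] [SMul ℂ M] (f : M → M) (μ : ℂ) : Prop :=
  ∃ X, X ≠ 0 ∧ f X = μ • X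

noncomputable def phaseAverage (l m : ℂ) (X : Matrix (Fin 2) (Fin 2) ℂ) : Matrix (Fin 2) (Fin 2) ℂ :=
  !![(X 0 0 + X 1 1) / 2, l * X 0 1; m * X 1 0, (X 0 0 + X 1 1) / 2]

namespace phaseAverage

variable (l m : ℂ)

theorem hasEigenvector_one : HasEigenvector (phaseAverage l m) 1 :=
  ⟨1, one_ne_zero, by ext i j; fin_cases i <;> fin_cases j <;> norm_num [phaseAverage]⟩

theorem hasEigenvector_left : HasEigenvector (phaseAverage l m) l :=
  ⟨!![0, 1; 0, 0], fun h => by simpa using congrFun (congrFun h 0) 1,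
    by ext i j; fin_cases i <;> fin_cases j <;> simp [phaseAverage]⟩

theorem hasEigenvector_right : HasEigenvector (phaseAverage l m) m :=
  ⟨!![0, 0; 1, 0], fun h => by simpa using congrFun (congrFun h 1) 0,
    by ext i j; fin_cases i <;> fin_cases j <;> simp [phaseAverage]⟩

theorem eigenvalue_mem {μ : ℂ} (h : HasEigenvector (phaseAverage l m) μ) :
    μ = 0 ∨ μ = 1 ∨ μ = l ∨ μ = m := by
  obtain ⟨X, hX, hXμ⟩ := h
  have entry (i j : Fin 2) := congrFun (congrFun hXμ i) j
  simp only [phaseAverage, Matrix.smul_apply, smul_eq_mul] at entry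
  have h00 := entry 0 0
  have h01 := entry 0 1
  have h10 := entry 1 0
  have h11 := entry 1 1
  simp only [of_apply, cons_val', cons_val_zero, cons_val_one, empty_val',
    cons_val_fin_one] at h00 h01 h10 h11
  by_cases hb : X 0 1 = 0
  swap
  · exact .inr <| .inr <| .inl (mul_right_cancel₀ hb h01).symm
  by_cases hc : X 1 0 = 0
  swap
  · exact .inr <| .inr <| .inr (mul_right_cancel₀ hc h10).symm
  by_cases hμ : μ = 0
  · exact .inl hμ
  have had : X 0 0 = X 1 1 := mul_left_cancel₀ hμ (h00.symm.trans h11)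
  have ha : X 0 0 ≠ 0 := by
    intro ha
    apply hX
    ext i j
    fin_cases i <;> fin_cases j <;> simp [ha, hb, hc, ← had]
  have : (1 - μ) * X 0 0 = 0 := by linear_combination h00 + had / 2
  exact .inr <| .inl (sub_eq_zero.mp ((mul_eq_zero.mp this).resolve_right ha)).symm

theorem unit_eigenvalues_of_norm_eq_one {l : ℂ} (hl : ‖l‖ = 1) :
    {μ : ℂ | ‖μ‖ = 1 ∧ HasEigenvector (phaseAverage l (conj l)) μ} = {1, l, conj l} := by
  ext μ
  simp only [Set.mem_ofPred_eq, Set.mem_insert_iff, Set.mem_singleton_iff]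
  constructor
  · rintro ⟨hμ, hμ'⟩
    rcases eigenvalue_mem _ _ hμ' with rfl | h
    · simp at hμ
    · exact h
  · rintro (rfl | rfl | rfl)
    · exact ⟨norm_one, hasEigenvector_one _ _⟩
    · exact ⟨hl, hasEigenvector_left _ _⟩
    · exact ⟨by simpa using hl, hasEigenvector_right _ _⟩

end phaseAverage

theorem Complex.sq_ne_zero_one_self_conj {l : ℂ} (hl : ‖l‖ = 1) (hl2 : l ≠ -1) (hl3 : l ^ 3 ≠ 1) :
    l ^ 2 ≠ 0 ∧ l ^ 2 ≠ 1 ∧ l ^ 2 ≠ l ∧ l ^ 2 ≠ conj l := by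
  have hl0 : l ≠ 0 := norm_ne_zero_iff.mp (by simp [hl])
  have hl1 : l ≠ 1 := by rintro rfl; simp at hl3
  have hconj : l * conj l = 1 := by
    rw [Complex.mul_conj, Complex.normSq_eq_norm_sq, hl]; norm_num
  refine ⟨pow_ne_zero 2 hl0, fun h => ?_, fun h => ?_, fun h => hl3 ?_⟩
  · exact (sq_eq_one_iff.mp h).elim hl1 hl2
  · exact hl1 (mul_left_cancel₀ hl0 (by linear_combination h))
  · rw [pow_succ', h, hconj]

theorem stmt_17 (l₀ : ℂ) (hl₀ : ‖l₀‖ = 1) (hl₀2 : l₀ ≠ -1) (hl₀3 : l₀ ^ 3 ≠ 1)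
    (Φ : Matrix (Fin 2) (Fin 2) ℂ → Matrix (Fin 2) (Fin 2) ℂ)
    (hΦ : ∀ X, Φ X = !![(X 0 0 + X 1 1) / 2, l₀ * X 0 1;
                        (starRingEnd ℂ) l₀ * X 1 0, (X 0 0 + X 1 1) / 2]) :
    (∃ X, X ≠ 0 ∧ Φ X = l₀ • X) ∧
    (¬ ∃ X, X ≠ 0 ∧ Φ X = (l₀ ^ 2) • X) ∧
    {l : ℂ | ‖l‖ = 1 ∧ ∃ X, X ≠ 0 ∧ Φ X = l • X} = {1, l₀, (starRingEnd ℂ) l₀} ∧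
    ¬ (∀ μ ∈ {l : ℂ | ‖l‖ = 1 ∧ ∃ X, X ≠ 0 ∧ Φ X = l • X},
       ∀ ν ∈ {l : ℂ | ‖l‖ = 1 ∧ ∃ X, X ≠ 0 ∧ Φ X = l • X},
         μ * ν ∈ {l : ℂ | ‖l‖ = 1 ∧ ∃ X, X ≠ 0 ∧ Φ X = l • X}) := by
  obtain rfl : Φ = phaseAverage l₀ (conj l₀) := funext hΦ
  have hset := phaseAverage.unit_eigenvalues_of_norm_eq_one hl₀
  have not_sq : ¬ HasEigenvector (phaseAverage l₀ (conj l₀)) (l₀ ^ 2) := by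
    obtain ⟨h0, h1, hl, hconj⟩ := Complex.sq_ne_zero_one_self_conj hl₀ hl₀2 hl₀3
    intro h
    rcases phaseAverage.eigenvalue_mem _ _ h with h | h | h | h <;> contradiction
  refine ⟨phaseAverage.hasEigenvector_left _ _, not_sq, hset, fun hmul => not_sq ?_⟩
  have hl₀_mem : l₀ ∈ {l : ℂ | ‖l‖ = 1 ∧ HasEigenvector (phaseAverage l₀ (conj l₀)) l} := by
    simp [hset]
  rw [sq]
  exact (hmul l₀ hl₀_mem l₀ hl₀_mem).2
end
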